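/- If λ = (λ₁,λ₂,λ₃) satisfies (λ₁-λ₁')² + (λ₂-λ₂')² + (λ₃-λ₃')² > ‖A₁-λ₁'‖² + ‖A₂-λ₂'‖² + ‖A₃-λ₃'‖² + ‖[A₁,A₂]‖ + ‖[A₂,A₃]‖ + ‖[A₃,A₁]‖ + 2(‖A₁-λ₁'‖ + ‖A₂-λ₂'‖ + ‖A₃-λ₃'‖)|λ-λ'| for some λ' ∈ ℝ³, then sufficiently far from the joint spectrum the localizer L_λ(A₁,A₂,A₃) is invertible; in particular, for any unit vector v̂ there is j with ‖(Aⱼ-λⱼ)v̂‖² > (sum of commutator norms)/1, so λ is not in the localizer spectrum. -/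

import Mathlib

open Matrix
open scoped Kronecker Matrix.Norms.L2Operator

noncomputable section

def pauli1 : Matrix (Fin 2) (Fin 2) ℂ := !![0, 1; 1, 0]
def pauli2 : Matrix (Fin 2) (Fin 2) ℂ := !![0, -Complex.I; Complex.I, 0]
def pauli3 : Matrix (Fin 2) (Fin 2) ℂ := !![1, 0; 0, -1]

def localizer {N : ℕ} (A₁ A₂ A₃ : Matrix (Fin N) (Fin N) ℂ) (lam : Fin 3 → ℝ) :
    Matrix (Fin 2 × Fin N) (Fin 2 × Fin N) ℂ :=
  pauli1 ⊗ₖ (A₁ - (lam 0 : ℂ) • 1) + pauli2 ⊗ₖ (A₂ - (lam 1 : ℂ) • 1)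
    + pauli3 ⊗ₖ (A₃ - (lam 2 : ℂ) • 1)

/-!
If `L_λ u = 0`, write `L_λ² = Σⱼ 1 ⊗ (Aⱼ - λⱼ)² + i C`, where the Pauli relations make `C` a sum
of Pauli matrices tensored with the commutators `[Aᵢ, Aⱼ]` (shifting by scalars does not change
them). Pairing `L_λ² u = 0` with `u` gives `Σⱼ ‖(1 ⊗ (Aⱼ - λⱼ)) u‖² ≤ ‖C‖ ‖u‖²`, and `‖C‖` is at
most the sum of the commutator norms since the Pauli matrices are unitary. On the other side,
`Aⱼ - λⱼ = (Aⱼ - λⱼ') - (λⱼ - λⱼ')` and the triangle inequality give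
`‖(1 ⊗ (Aⱼ - λⱼ)) u‖² ≥ ((λⱼ - λⱼ')² - 2 |λⱼ - λⱼ'| ‖Aⱼ - λⱼ'‖) ‖u‖²`. Summing, and using
`|λⱼ - λⱼ'| ≤ |λ - λ'|`, contradicts the hypothesis on `λ`.
-/

namespace Matrix

theorem kronecker_sub {l m n p α : Type*} [NonUnitalNonAssocRing α] (A : Matrix l m α)
    (B₁ B₂ : Matrix n p α) : A ⊗ₖ (B₁ - B₂) = A ⊗ₖ B₁ - A ⊗ₖ B₂ := by
  ext; simp [mul_sub]

theorem IsHermitian.sub_ofReal_smul_one {n : Type*} [DecidableEq n] {A : Matrix n n ℂ}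
    (hA : A.IsHermitian) (r : ℝ) : (A - (r : ℂ) • 1).IsHermitian := by
  simp [IsHermitian, hA.eq]

variable {𝕜 l n : Type*} [RCLike 𝕜] [Fintype l] [DecidableEq l] [Fintype n] [DecidableEq n]

omit [DecidableEq n] in
theorem one_kronecker_mulVec (M : Matrix n n 𝕜) (x : l × n → 𝕜) (s : l) (i : n) :
    ((1 : Matrix l l 𝕜) ⊗ₖ M *ᵥ x) (s, i) = (M *ᵥ fun j ↦ x (s, j)) i := by
  simp [mulVec, dotProduct, kroneckerMap_apply, Fintype.sum_prod_type, one_apply]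

theorem l2_opNorm_one_kronecker_le (M : Matrix n n 𝕜) : ‖(1 : Matrix l l 𝕜) ⊗ₖ M‖ ≤ ‖M‖ := by
  rw [cstar_norm_def]
  refine ContinuousLinearMap.opNorm_le_bound _ (norm_nonneg _) fun x ↦ ?_
  refine (sq_le_sq₀ (norm_nonneg _) (by positivity)).mp ?_
  have block (w : n → 𝕜) : ∑ i, ‖(M *ᵥ w) i‖ ^ 2 ≤ ‖M‖ ^ 2 * ∑ i, ‖w i‖ ^ 2 := by
    have := (toEuclideanCLM (𝕜 := 𝕜) M).le_opNorm (WithLp.toLp 2 w)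
    rw [← cstar_norm_def] at this
    simpa [EuclideanSpace.norm_sq_eq, mul_pow] using pow_le_pow_left₀ (norm_nonneg _) this 2
  simpa [EuclideanSpace.norm_sq_eq, one_kronecker_mulVec, Fintype.sum_prod_type, mul_pow,
    Finset.mul_sum] using Finset.sum_le_sum fun s _ ↦ block fun j ↦ x (s, j)

theorem l2_opNorm_kronecker_le_of_mem_unitary {U : Matrix l l 𝕜}
    (hU : U ∈ unitary (Matrix l l 𝕜)) (M : Matrix n n 𝕜) : ‖U ⊗ₖ M‖ ≤ ‖M‖ := by
  nontriviality (Matrix (l × n) (l × n) 𝕜)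
  have hU1 : U ⊗ₖ (1 : Matrix n n 𝕜) ∈ unitary _ := by
    rw [Unitary.mem_iff, star_eq_conjTranspose] at hU ⊢
    rw [conjTranspose_kronecker, conjTranspose_one, ← mul_kronecker_mul, ← mul_kronecker_mul,
      hU.1, hU.2, mul_one, one_kronecker_one]
    exact ⟨rfl, rfl⟩
  calc ‖U ⊗ₖ M‖ = ‖U ⊗ₖ (1 : Matrix n n 𝕜) * (1 ⊗ₖ M)‖ := by
        rw [← mul_kronecker_mul, mul_one, one_mul]
    _ ≤ ‖U ⊗ₖ (1 : Matrix n n 𝕜)‖ * ‖(1 : Matrix l l 𝕜) ⊗ₖ M‖ := norm_mul_le _ _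
    _ ≤ ‖M‖ := by
        rw [CStarRing.norm_of_mem_unitary hU1, one_mul]
        exact l2_opNorm_one_kronecker_le M

theorem isSelfAdjoint_toEuclideanCLM_one_kronecker {M : Matrix n n 𝕜} (hM : M.IsHermitian) :
    IsSelfAdjoint (toEuclideanCLM (𝕜 := 𝕜) ((1 : Matrix l l 𝕜) ⊗ₖ M)) := by
  refine IsSelfAdjoint.map ?_ _
  rw [IsSelfAdjoint, star_eq_conjTranspose, conjTranspose_kronecker, conjTranspose_one, hM.eq]

end Matrix

theorem lie_sub_smul_one_sub_smul_one {R A : Type*} [CommRing R] [Ring A] [Algebra R A]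
    (x y : A) (a b : R) : ⁅x - a • 1, y - b • 1⁆ = ⁅x, y⁆ := by
  simp only [Ring.lie_def, sub_mul, mul_sub, smul_mul_assoc, mul_smul_comm, one_mul, mul_one]
  module

theorem sum_norm_sq_le_of_mul_self_apply_eq_zero {E : Type*} [NormedAddCommGroup E]
    [InnerProductSpace ℂ E] [CompleteSpace E] {T E₁ E₂ E₃ C : E →L[ℂ] E}
    (h₁ : IsSelfAdjoint E₁) (h₂ : IsSelfAdjoint E₂) (h₃ : IsSelfAdjoint E₃)
    (hT : T * T = E₁ * E₁ + E₂ * E₂ + E₃ * E₃ + Complex.I • C) {x : E} (hx : T x = 0) :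
    ‖E₁ x‖ ^ 2 + ‖E₂ x‖ ^ 2 + ‖E₃ x‖ ^ 2 ≤ ‖C‖ * ‖x‖ ^ 2 := by
  have hsq {F : E →L[ℂ] E} (hF : IsSelfAdjoint F) : inner ℂ x (F (F x)) = (‖F x‖ : ℂ) ^ 2 :=
    (hF.isSymmetric x (F x)).symm.trans (inner_self_eq_norm_sq_to_K _)
  have h0 : E₁ (E₁ x) + E₂ (E₂ x) + E₃ (E₃ x) + Complex.I • C x = 0 := by
    simpa [hx] using (congr($hT x)).symm
  replace h0 := congrArg (inner ℂ x) h0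
  rw [inner_add_right, inner_add_right, inner_add_right, inner_smul_right, hsq h₁, hsq h₂, hsq h₃,
    inner_zero_right] at h0
  have hsum : ((‖E₁ x‖ ^ 2 + ‖E₂ x‖ ^ 2 + ‖E₃ x‖ ^ 2 : ℝ) : ℂ) =
      -(Complex.I * inner ℂ x (C x)) := by
    push_cast; linear_combination h0
  calc ‖E₁ x‖ ^ 2 + ‖E₂ x‖ ^ 2 + ‖E₃ x‖ ^ 2 = ‖-(Complex.I * inner ℂ x (C x))‖ := by
        rw [← hsum, Complex.norm_real, Real.norm_of_nonneg (by positivity)]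
    _ ≤ ‖x‖ * ‖C x‖ := by
        rw [norm_neg, norm_mul, Complex.norm_I, one_mul]
        exact norm_inner_le_norm _ _
    _ ≤ ‖C‖ * ‖x‖ ^ 2 := by nlinarith [C.le_opNorm x, norm_nonneg x]

theorem norm_sq_sub_mul_le_norm_sub_smul_apply_sq {𝕜 E : Type*} [NontriviallyNormedField 𝕜]
    [SeminormedAddCommGroup E] [NormedSpace 𝕜 E] {F : E →L[𝕜] E} {c : ℝ} (hF : ‖F‖ ≤ c)
    (a : 𝕜) (x : E) : (‖a‖ ^ 2 - 2 * ‖a‖ * c) * ‖x‖ ^ 2 ≤ ‖(F - a • 1) x‖ ^ 2 := by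
  have hFx : ‖F x‖ ≤ c * ‖x‖ := (F.le_opNorm x).trans (by gcongr)
  have htri : ‖a‖ * ‖x‖ ≤ ‖(F - a • 1) x‖ + c * ‖x‖ := by
    rw [← norm_smul]
    calc ‖a • x‖ = ‖F x - (F - a • 1) x‖ := by simp
      _ ≤ ‖F x‖ + ‖(F - a • 1) x‖ := norm_sub_le _ _
      _ ≤ _ := by linarith
  have hc : 0 ≤ c * ‖x‖ := mul_nonneg ((norm_nonneg F).trans hF) (norm_nonneg x)
  have hD : 0 ≤ ‖a‖ * ‖x‖ := by positivity
  -- either the left side is nonpositive, or `htri` can be squared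
  rcases le_or_gt (‖a‖ * ‖x‖) (2 * (c * ‖x‖)) with hsmall | hlarge
  · nlinarith [sq_nonneg ‖(F - a • 1) x‖]
  · nlinarith [norm_nonneg ((F - a • 1) x)]

open Complex in
theorem pauli_mul_pauli :
    pauli1 * pauli1 = 1 ∧ pauli2 * pauli2 = 1 ∧ pauli3 * pauli3 = 1 ∧
    pauli1 * pauli2 = I • pauli3 ∧ pauli2 * pauli1 = -I • pauli3 ∧
    pauli2 * pauli3 = I • pauli1 ∧ pauli3 * pauli2 = -I • pauli1 ∧
    pauli3 * pauli1 = I • pauli2 ∧ pauli1 * pauli3 = -I • pauli2 := by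
  refine ⟨?_, ?_, ?_, ?_, ?_, ?_, ?_, ?_, ?_⟩ <;> ext i j <;> fin_cases i <;> fin_cases j <;>
    simp [pauli1, pauli2, pauli3, mul_apply]

theorem pauli_mem_unitary :
    pauli1 ∈ unitary (Matrix (Fin 2) (Fin 2) ℂ) ∧ pauli2 ∈ unitary (Matrix (Fin 2) (Fin 2) ℂ) ∧
      pauli3 ∈ unitary (Matrix (Fin 2) (Fin 2) ℂ) := by
  refine ⟨?_, ?_, ?_⟩ <;> rw [Unitary.mem_iff] <;> constructor <;> ext i j <;> fin_cases i <;>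
    fin_cases j <;> simp [pauli1, pauli2, pauli3, mul_apply]

section Pauli

variable {n : Type*} [Fintype n] [DecidableEq n]

theorem pauli_kronecker_sum_mul_self (B₁ B₂ B₃ : Matrix n n ℂ) :
    (pauli1 ⊗ₖ B₁ + pauli2 ⊗ₖ B₂ + pauli3 ⊗ₖ B₃) * (pauli1 ⊗ₖ B₁ + pauli2 ⊗ₖ B₂ + pauli3 ⊗ₖ B₃) =
      1 ⊗ₖ (B₁ * B₁ + B₂ * B₂ + B₃ * B₃) +
        Complex.I • (pauli3 ⊗ₖ ⁅B₁, B₂⁆ + pauli1 ⊗ₖ ⁅B₂, B₃⁆ + pauli2 ⊗ₖ ⁅B₃, B₁⁆) := by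
  obtain ⟨h11, h22, h33, h12, h21, h23, h32, h31, h13⟩ := pauli_mul_pauli
  simp only [add_mul, mul_add, ← mul_kronecker_mul, h11, h22, h33, h12, h21, h23, h32, h31, h13,
    Ring.lie_def, kronecker_add, kronecker_sub, smul_kronecker]
  module

theorem norm_pauli_kronecker_sum_le (X Y Z : Matrix n n ℂ) :
    ‖pauli3 ⊗ₖ X + pauli1 ⊗ₖ Y + pauli2 ⊗ₖ Z‖ ≤ ‖X‖ + ‖Y‖ + ‖Z‖ := by
  obtain ⟨h₁, h₂, h₃⟩ := pauli_mem_unitary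
  grw [norm_add₃_le, l2_opNorm_kronecker_le_of_mem_unitary h₁,
    l2_opNorm_kronecker_le_of_mem_unitary h₂, l2_opNorm_kronecker_le_of_mem_unitary h₃]

end Pauli

theorem localizer_mul_self {N : ℕ} (A₁ A₂ A₃ : Matrix (Fin N) (Fin N) ℂ) (lam : Fin 3 → ℝ) :
    localizer A₁ A₂ A₃ lam * localizer A₁ A₂ A₃ lam =
      1 ⊗ₖ ((A₁ - (lam 0 : ℂ) • 1) * (A₁ - (lam 0 : ℂ) • 1) +
        (A₂ - (lam 1 : ℂ) • 1) * (A₂ - (lam 1 : ℂ) • 1) +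
        (A₃ - (lam 2 : ℂ) • 1) * (A₃ - (lam 2 : ℂ) • 1)) +
      Complex.I • (pauli3 ⊗ₖ ⁅A₁, A₂⁆ + pauli1 ⊗ₖ ⁅A₂, A₃⁆ + pauli2 ⊗ₖ ⁅A₃, A₁⁆) := by
  rw [localizer, pauli_kronecker_sum_mul_self, lie_sub_smul_one_sub_smul_one,
    lie_sub_smul_one_sub_smul_one, lie_sub_smul_one_sub_smul_one]

theorem sum_norm_sq_le_of_localizer_apply_eq_zero {N : ℕ} {A₁ A₂ A₃ : Matrix (Fin N) (Fin N) ℂ}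
    (hA₁ : A₁.IsHermitian) (hA₂ : A₂.IsHermitian) (hA₃ : A₃.IsHermitian) {lam : Fin 3 → ℝ}
    {x : EuclideanSpace ℂ (Fin 2 × Fin N)}
    (hx : toEuclideanCLM (𝕜 := ℂ) (localizer A₁ A₂ A₃ lam) x = 0) :
    ‖toEuclideanCLM (𝕜 := ℂ) ((1 : Matrix (Fin 2) (Fin 2) ℂ) ⊗ₖ (A₁ - (lam 0 : ℂ) • 1)) x‖ ^ 2 +
      ‖toEuclideanCLM (𝕜 := ℂ) ((1 : Matrix (Fin 2) (Fin 2) ℂ) ⊗ₖ (A₂ - (lam 1 : ℂ) • 1)) x‖ ^ 2 +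
      ‖toEuclideanCLM (𝕜 := ℂ) ((1 : Matrix (Fin 2) (Fin 2) ℂ) ⊗ₖ (A₃ - (lam 2 : ℂ) • 1)) x‖ ^ 2 ≤
      (‖⁅A₁, A₂⁆‖ + ‖⁅A₂, A₃⁆‖ + ‖⁅A₃, A₁⁆‖) * ‖x‖ ^ 2 := by
  refine (sum_norm_sq_le_of_mul_self_apply_eq_zero
    (C := toEuclideanCLM (𝕜 := ℂ) (pauli3 ⊗ₖ ⁅A₁, A₂⁆ + pauli1 ⊗ₖ ⁅A₂, A₃⁆ + pauli2 ⊗ₖ ⁅A₃, A₁⁆))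
    (isSelfAdjoint_toEuclideanCLM_one_kronecker (hA₁.sub_ofReal_smul_one _))
    (isSelfAdjoint_toEuclideanCLM_one_kronecker (hA₂.sub_ofReal_smul_one _))
    (isSelfAdjoint_toEuclideanCLM_one_kronecker (hA₃.sub_ofReal_smul_one _)) ?_ hx).trans ?_
  · rw [← map_mul, localizer_mul_self, ← map_smul, ← map_mul, ← map_mul, ← map_mul, ← map_add,
      ← map_add, ← map_add, ← mul_kronecker_mul, ← mul_kronecker_mul, ← mul_kronecker_mul, mul_one,
      kronecker_add, kronecker_add]
  · gcongr
    exact norm_pauli_kronecker_sum_le _ _ _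

theorem norm_one_kronecker_sub_smul_apply_sq_lower_bound {m n : Type*} [Fintype m] [DecidableEq m]
    [Fintype n] [DecidableEq n] (A : Matrix n n ℂ) (l l' : ℝ) (x : EuclideanSpace ℂ (m × n)) :
    ((l - l') ^ 2 - 2 * |l - l'| * ‖A - (l' : ℂ) • 1‖) * ‖x‖ ^ 2 ≤
      ‖toEuclideanCLM (𝕜 := ℂ) ((1 : Matrix m m ℂ) ⊗ₖ (A - (l : ℂ) • 1)) x‖ ^ 2 := by
  have hshift : (1 : Matrix m m ℂ) ⊗ₖ (A - (l : ℂ) • 1) =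
      (1 : Matrix m m ℂ) ⊗ₖ (A - (l' : ℂ) • 1) - ((l - l' : ℝ) : ℂ) • 1 := by
    rw [kronecker_sub, kronecker_sub, kronecker_smul, kronecker_smul, one_kronecker_one]
    push_cast
    module
  have hF : ‖toEuclideanCLM (𝕜 := ℂ) (n := m × n) ((1 : Matrix m m ℂ) ⊗ₖ (A - (l' : ℂ) • 1))‖ ≤
      ‖A - (l' : ℂ) • 1‖ := l2_opNorm_one_kronecker_le _
  have := norm_sq_sub_mul_le_norm_sub_smul_apply_sq hF ((l - l' : ℝ) : ℂ) x
  rw [hshift, map_sub, map_smul, map_one]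
  simpa only [Complex.norm_real, Real.norm_eq_abs, sq_abs] using this

/-- Points `λ` sufficiently far from `λ'` (compared to the norms `‖Aⱼ - λⱼ'‖` and the
commutator norms) are not in the localizer spectrum: `L_λ` has no zero eigenvalue. -/
theorem localizer_spectrum_bounded {N : ℕ}
    (A₁ A₂ A₃ : Matrix (Fin N) (Fin N) ℂ)
    (hA₁ : A₁.IsHermitian) (hA₂ : A₂.IsHermitian) (hA₃ : A₃.IsHermitian)
    (lam lam' : Fin 3 → ℝ)
    (hfar : ‖A₁ - (lam' 0 : ℂ) • 1‖ ^ 2 + ‖A₂ - (lam' 1 : ℂ) • 1‖ ^ 2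
          + ‖A₃ - (lam' 2 : ℂ) • 1‖ ^ 2
        + ‖⁅A₁, A₂⁆‖ + ‖⁅A₂, A₃⁆‖ + ‖⁅A₃, A₁⁆‖
        + 2 * (‖A₁ - (lam' 0 : ℂ) • 1‖ + ‖A₂ - (lam' 1 : ℂ) • 1‖ + ‖A₃ - (lam' 2 : ℂ) • 1‖)
          * Real.sqrt ((lam 0 - lam' 0) ^ 2 + (lam 1 - lam' 1) ^ 2 + (lam 2 - lam' 2) ^ 2)
      < (lam 0 - lam' 0) ^ 2 + (lam 1 - lam' 1) ^ 2 + (lam 2 - lam' 2) ^ 2) :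
    ¬ ∃ u : Fin 2 × Fin N → ℂ, u ≠ 0 ∧ (localizer A₁ A₂ A₃ lam).mulVec u = 0 := by
  rintro ⟨u, hu, hLu⟩
  set x : EuclideanSpace ℂ (Fin 2 × Fin N) := WithLp.toLp 2 u
  have hx : 0 < ‖x‖ ^ 2 := by positivity [show x ≠ 0 by simpa [x] using hu]
  have upper := sum_norm_sq_le_of_localizer_apply_eq_zero hA₁ hA₂ hA₃ (lam := lam) (x := x)
    (by simp [x, hLu])
  have lower₁ := norm_one_kronecker_sub_smul_apply_sq_lower_bound A₁ (lam 0) (lam' 0) x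
  have lower₂ := norm_one_kronecker_sub_smul_apply_sq_lower_bound A₂ (lam 1) (lam' 1) x
  have lower₃ := norm_one_kronecker_sub_smul_apply_sq_lower_bound A₃ (lam 2) (lam' 2) x
  have key : (lam 0 - lam' 0) ^ 2 + (lam 1 - lam' 1) ^ 2 + (lam 2 - lam' 2) ^ 2
      - 2 * (|lam 0 - lam' 0| * ‖A₁ - (lam' 0 : ℂ) • 1‖ + |lam 1 - lam' 1| * ‖A₂ - (lam' 1 : ℂ) • 1‖
        + |lam 2 - lam' 2| * ‖A₃ - (lam' 2 : ℂ) • 1‖) ≤ ‖⁅A₁, A₂⁆‖ + ‖⁅A₂, A₃⁆‖ + ‖⁅A₃, A₁⁆‖ :=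
    le_of_mul_le_mul_right (by linarith) hx
  set r := Real.sqrt ((lam 0 - lam' 0) ^ 2 + (lam 1 - lam' 1) ^ 2 + (lam 2 - lam' 2) ^ 2)
  have hd₁ : |lam 0 - lam' 0| ≤ r := Real.abs_le_sqrt (by nlinarith)
  have hd₂ : |lam 1 - lam' 1| ≤ r := Real.abs_le_sqrt (by nlinarith)
  have hd₃ : |lam 2 - lam' 2| ≤ r := Real.abs_le_sqrt (by nlinarith)
  nlinarith [norm_nonneg (A₁ - (lam' 0 : ℂ) • 1), norm_nonneg (A₂ - (lam' 1 : ℂ) • 1),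
    norm_nonneg (A₃ - (lam' 2 : ℂ) • 1)]
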